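/- arXiv:2104.07828 — 8 statements merged into one kernel-verified Lean document; each statement's English description precedes it below -/
import Mathlib

section
/- Let M be a set endowed with two metrics d0 and d1 and let r : M → (0,∞) satisfy, for all x,y ∈ M, |d0(x,y) − d1(x,y)| ≤ r(x) + r(y) and |r(x) − r(y)| ≤ d0(x,y) + d1(x,y). Suppose moreover that there is a constant L > 0 such that |r(x) − r(y)| ≤ L·min{d0(x,y), d1(x,y)} for all x,y ∈ M. Set h(x,y) = min{d0(x,y), d1(x,y)} and A = max{2L+1, 3}. Then for all x,y ∈ M, (1/A)·(h(x,y) + max{r(x), r(y)}) ≤ inf_{z ∈ M} (d0(x,z) + d1(z,y) + r(z)) ≤ h(x,y) + max{r(x), r(y)}. -/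
/-- `d` is a metric on `M`. -/
def IsMetric {M : Type*} (d : M → M → ℝ) : Prop :=
  (∀ x, d x x = 0) ∧ (∀ x y, x ≠ y → 0 < d x y) ∧
  (∀ x y, d x y = d y x) ∧ (∀ x y z, d x z ≤ d x y + d y z)

lemma IsMetric.nonneg {M : Type*} {d : M → M → ℝ} (h : IsMetric d) (x y : M) :
    0 ≤ d x y := by
  rcases eq_or_ne x y with rfl | hne
  · exact (h.1 x).ge
  · exact (h.2.1 x y hne).le

/-- Lemma 3.5(a): two-sided estimate for the twisted-union distance between
`(x,0)` and `(y,1)` when the joining function `r` is Lipschitz with respect to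
both metrics. -/
theorem twisted_union_dist_estimate_lipschitz_r
    {M : Type*} (d0 d1 : M → M → ℝ) (r : M → ℝ)
    (hd0 : IsMetric d0) (hd1 : IsMetric d1)
    (hrpos : ∀ x, 0 < r x)
    (hCnd2 : ∀ x y, |d0 x y - d1 x y| ≤ r x + r y)
    (hCnd1 : ∀ x y, |r x - r y| ≤ d0 x y + d1 x y)
    (L : ℝ) (hL : 0 < L)
    (hLip : ∀ x y, |r x - r y| ≤ L * min (d0 x y) (d1 x y)) :
    ∀ x y : M,
      (1 / max (2 * L + 1) 3) * (min (d0 x y) (d1 x y) + max (r x) (r y))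
          ≤ (⨅ z : M, d0 x z + d1 z y + r z) ∧
      (⨅ z : M, d0 x z + d1 z y + r z)
          ≤ min (d0 x y) (d1 x y) + max (r x) (r y) := by
  intro x y
  set A : ℝ := max (2 * L + 1) 3 with hA
  have hA3 : (3 : ℝ) ≤ A := le_max_right _ _
  have hA1 : 2 * L + 1 ≤ A := le_max_left _ _
  have hApos : 0 < A := by linarith
  have hbdd : BddBelow (Set.range fun z : M => d0 x z + d1 z y + r z) := by
    refine ⟨0, ?_⟩
    rintro _ ⟨z, rfl⟩
    have := hd0.nonneg x z
    have := hd1.nonneg z y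
    have := (hrpos z).le
    dsimp; linarith
  haveI : Nonempty M := ⟨x⟩
  constructor
  · refine le_ciInf fun z => ?_
    rw [div_mul_eq_mul_div, one_mul, div_le_iff₀ hApos]
    -- key facts
    have hmin0 : min (d0 x y) (d1 x y) ≤ d0 x y := min_le_left _ _
    have htri : d0 x y ≤ d0 x z + d0 z y := hd0.2.2.2 x z y
    have h2 : d0 z y ≤ d1 z y + (r z + r y) := by
      have := (abs_le.1 (hCnd2 z y)).2
      linarith
    have hry : r y ≤ r z + L * d1 z y := by
      have h := (abs_le.1 (hLip y z)).2
      have hmin : min (d0 y z) (d1 y z) ≤ d1 z y := by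
        rw [hd1.2.2.1 y z] at *
        exact min_le_right _ _
      nlinarith [hd1.nonneg z y]
    have hrx : r x ≤ r z + L * d0 x z := by
      have h := (abs_le.1 (hLip x z)).2
      have hmin : min (d0 x z) (d1 x z) ≤ d0 x z := min_le_left _ _
      nlinarith [hd0.nonneg x z]
    have hmaxr : max (r x) (r y) ≤ r z + L * (d0 x z + d1 z y) := by
      refine max_le ?_ ?_
      · nlinarith [hd1.nonneg z y]
      · nlinarith [hd0.nonneg x z]
    have h0 := hd0.nonneg x z
    have h1 := hd1.nonneg z y
    have hrz := hrpos z
    nlinarith [mul_nonneg (sub_nonneg.2 hA3) h0, mul_nonneg (sub_nonneg.2 hA3) h1,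
      mul_nonneg (sub_nonneg.2 hA1) h0, mul_nonneg (sub_nonneg.2 hA1) h1,
      mul_nonneg hL.le h0, mul_nonneg hL.le h1]
  · rcases le_total (d0 x y) (d1 x y) with hle | hle
    · calc (⨅ z : M, d0 x z + d1 z y + r z) ≤ d0 x y + d1 y y + r y := ciInf_le hbdd y
        _ ≤ min (d0 x y) (d1 x y) + max (r x) (r y) := by
            rw [hd1.1 y, min_eq_left hle]
            have := le_max_right (r x) (r y)
            linarith
    · calc (⨅ z : M, d0 x z + d1 z y + r z) ≤ d0 x x + d1 x y + r x := ciInf_le hbdd x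
        _ ≤ min (d0 x y) (d1 x y) + max (r x) (r y) := by
            rw [hd0.1 x, min_eq_right hle]
            have := le_max_left (r x) (r y)
            linarith
end

section
/- Let M be a set endowed with two metrics d0 and d1 and let r > 0 be a constant with |d0(x,y) − d1(x,y)| ≤ 2r for all x,y ∈ M. Set h(x,y) = min{d0(x,y), d1(x,y)}. Then for all x,y ∈ M, (1/3)·(r + h(x,y)) ≤ inf_{z ∈ M} (d0(x,z) + d1(z,y) + r) ≤ r + h(x,y). -/
/-- Lemma 3.5(b): two-sided estimate for the twisted-union distance between
`(x,0)` and `(y,1)` when the joining function is a constant `r > 0`. -/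
theorem twisted_union_dist_estimate_constant_r
    {M : Type*} (d0 d1 : M → M → ℝ)
    (hd0 : IsMetric d0) (hd1 : IsMetric d1)
    (r : ℝ) (hr : 0 < r)
    (hCnd : ∀ x y, |d0 x y - d1 x y| ≤ 2 * r) :
    ∀ x y : M,
      (1 / 3) * (r + min (d0 x y) (d1 x y))
          ≤ (⨅ z : M, d0 x z + d1 z y + r) ∧
      (⨅ z : M, d0 x z + d1 z y + r) ≤ r + min (d0 x y) (d1 x y) := by
  intro x y
  haveI : Nonempty M := ⟨x⟩
  have hbdd : BddBelow (Set.range fun z => d0 x z + d1 z y + r) := by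
    refine ⟨0, ?_⟩
    rintro _ ⟨z, rfl⟩
    have h4 := hd0.nonneg x z
    have h5 := hd1.nonneg z y
    dsimp only
    linarith
  constructor
  · apply le_ciInf
    intro z
    have h1 : d0 x y ≤ d0 x z + d0 z y := hd0.2.2.2 x z y
    have h2 : d0 z y - d1 z y ≤ 2 * r := (abs_le.mp (hCnd z y)).2
    have h3 : min (d0 x y) (d1 x y) ≤ d0 x y := min_le_left _ _
    have h4 := hd0.nonneg x z
    have h5 := hd1.nonneg z y
    linarith
  · have h1 : (⨅ z : M, d0 x z + d1 z y + r) ≤ d0 x x + d1 x y + r :=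
      ciInf_le hbdd x
    have h2 : (⨅ z : M, d0 x z + d1 z y + r) ≤ d0 x y + d1 y y + r :=
      ciInf_le hbdd y
    rw [hd0.1 x] at h1
    rw [hd1.1 y] at h2
    rcases min_cases (d0 x y) (d1 x y) with ⟨he, _⟩ | ⟨he, _⟩ <;> rw [he] <;> linarith
end

section
/- Let M be a set endowed with two metrics d0 and d1 and let r : M → (0,∞) satisfy, for all x,y ∈ M, |d0(x,y) − d1(x,y)| ≤ r(x) + r(y) and |r(x) − r(y)| ≤ d0(x,y) + d1(x,y). Suppose moreover that there is a constant C > 0 such that d1(x,y) ≤ C·d0(x,y) for all x,y ∈ M. Then for all x,y ∈ M, (1/(2C+1))·(d1(x,y) + r(x)) ≤ inf_{z ∈ M} (d0(x,z) + d1(z,y) + r(z)) ≤ d1(x,y) + r(x). -/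
/-- Lemma 3.7, first part: two-sided estimate for the twisted-union distance
between `(x,0)` and `(y,1)` when `d1 ≤ C·d0`. -/
theorem twisted_union_dist_estimate_d1_le_Cd0
    {M : Type*} (d0 d1 : M → M → ℝ) (r : M → ℝ)
    (hd0 : IsMetric d0) (hd1 : IsMetric d1)
    (hrpos : ∀ x, 0 < r x)
    (hCnd2 : ∀ x y, |d0 x y - d1 x y| ≤ r x + r y)
    (hCnd1 : ∀ x y, |r x - r y| ≤ d0 x y + d1 x y)
    (C : ℝ) (hC : 0 < C)
    (hdom : ∀ x y, d1 x y ≤ C * d0 x y) :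
    ∀ x y : M,
      (1 / (2 * C + 1)) * (d1 x y + r x)
          ≤ (⨅ z : M, d0 x z + d1 z y + r z) ∧
      (⨅ z : M, d0 x z + d1 z y + r z) ≤ d1 x y + r x := by
  intro x y
  have hCpos : (0:ℝ) < 2 * C + 1 := by linarith
  have hbdd : BddBelow (Set.range fun z : M => d0 x z + d1 z y + r z) := by
    refine ⟨0, ?_⟩
    rintro _ ⟨z, rfl⟩
    have := hd0.nonneg x z
    have := hd1.nonneg z y
    have := (hrpos z).le
    positivity
  constructor
  · have : Nonempty M := ⟨x⟩
    refine le_ciInf fun z => ?_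
    rw [div_mul_eq_mul_div, one_mul, div_le_iff₀ hCpos]
    have h1 : d1 x y ≤ d1 x z + d1 z y := hd1.2.2.2 x z y
    have h2 : d1 x z ≤ C * d0 x z := hdom x z
    have h3 : r x - r z ≤ d0 x z + d1 x z := (abs_le.mp (hCnd1 x z)).2
    have h4 : 0 ≤ d1 z y := hd1.nonneg z y
    have h5 : 0 < r z := hrpos z
    nlinarith [hd0.nonneg x z]
  · have := ciInf_le hbdd x
    simpa [hd0.1 x] using this
end

section
/- There exists a universal constant D (with D < 26.6) such that the following holds. Let M be a nonempty finite subset of an L1 space, let r > 0, and let ϖ0, ϖ1 : [0,∞) → [0,∞) be concave non-decreasing continuous functions vanishing only at 0, such that |ϖ0(t) − ϖ1(t)| ≤ 2r for all t ≥ 0. Then the r-twisted union (M × {0,1}, d) of the metric spaces (M, ϖ0(‖x−y‖₁)) and (M, ϖ1(‖x−y‖₁)) embeds into L1 with distortion at most D. -/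
open MeasureTheory

/-- `(M, f)` embeds into (some) `L₁` with distortion at most `K`, in the
generalized sense allowing `f` to be an arbitrary nonnegative function. -/
def EmbedsL1 {M : Type*} (f : M → M → ℝ) (K : ℝ) : Prop :=
  ∃ (Ω : Type) (_ : MeasurableSpace Ω) (μ : Measure Ω) (Ψ : M → Lp ℝ 1 μ),
    ∀ x y, f x y ≤ ‖Ψ x - Ψ y‖ ∧ ‖Ψ x - Ψ y‖ ≤ K * f x y

/-- The metric of the (generalized) twisted union of `(M, d0)` and `(M, d1)`
with joining function `r`, realized on `M × Bool` (`false` plays the role of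
`0` and `true` the role of `1`). -/
noncomputable def twistedDist {M : Type*} (d0 d1 : M → M → ℝ) (r : M → ℝ) :
    M × Bool → M × Bool → ℝ
  | (x, false), (y, false) => d0 x y
  | (x, true),  (y, true)  => d1 x y
  | (x, false), (y, true)  => ⨅ z : M, d0 x z + d1 z y + r z
  | (x, true),  (y, false) => ⨅ z : M, d0 y z + d1 z x + r z

/-! By the layer-cake formula, the `L₁` distance `ρ` on a finite family is a nonnegative
combination of cut semimetrics, and for such `ρ` the kernel `1 - exp (-ρ)` is again an `ℓ₁`
distance: it is twice the probability that an odd number of independently chosen cuts separate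
the two points. A concave nondecreasing `u` with `u 0 = 0` agrees on the finitely many values of
`ρ` with a nonnegative combination of the functions `min t θ`, each of which is within a factor
`2` of `θ (1 - exp (-t / θ))`; so `u ∘ ρ` is within a factor `2` of an `ℓ₁` distance. Applying
this to `min ϖ₀ 2r`, `min ϖ₁ 2r` and `min ϖ₀ ϖ₁` gives three `ℓ₁` distances from which the
twisted union is assembled with distortion `13`. -/

open Finset Real
open scoped ENNReal

-- Indexed by `Fin n` rather than an arbitrary finite type so that the witness lives in `Type`,
-- as `EmbedsL1` requires; `of_fintype` recovers the general form.
def IsFinL1Dist {M : Type*} (f : M → M → ℝ) : Prop :=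
  ∃ (n : ℕ) (G : M → Fin n → ℝ), ∀ x y, f x y = ∑ i, |G x i - G y i|

namespace IsFinL1Dist

variable {M N : Type*} {f g : M → M → ℝ}

theorem of_fintype {ι : Type*} [Fintype ι] (G : M → ι → ℝ)
    (hG : ∀ x y, f x y = ∑ i, |G x i - G y i|) : IsFinL1Dist f := by
  let e := Fintype.equivFin ι
  exact ⟨Fintype.card ι, fun x i => G x (e.symm i), fun x y => by
    rw [hG, ← e.symm.sum_comp]⟩

theorem zero : IsFinL1Dist (fun _ _ : M => (0 : ℝ)) :=
  ⟨0, fun _ => Fin.elim0, fun _ _ => by simp⟩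

theorem abs_sub (u : M → ℝ) : IsFinL1Dist (fun x y => |u x - u y|) :=
  of_fintype (ι := Unit) (fun x _ => u x) fun _ _ => by simp

theorem add (hf : IsFinL1Dist f) (hg : IsFinL1Dist g) : IsFinL1Dist (f + g) := by
  obtain ⟨n, F, hF⟩ := hf
  obtain ⟨m, G, hG⟩ := hg
  exact of_fintype (fun x => Sum.elim (F x) (G x)) fun x y => by
    simp [Fintype.sum_sum_type, hF, hG]

theorem const_mul (hf : IsFinL1Dist f) {c : ℝ} (hc : 0 ≤ c) :
    IsFinL1Dist (fun x y => c * f x y) := by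
  obtain ⟨n, F, hF⟩ := hf
  refine ⟨n, fun x i => c * F x i, fun x y => ?_⟩
  simp only [hF, mul_sum, ← mul_sub, abs_mul, abs_of_nonneg hc]

theorem comp (hf : IsFinL1Dist f) (φ : N → M) : IsFinL1Dist (fun x y => f (φ x) (φ y)) := by
  obtain ⟨n, F, hF⟩ := hf
  exact ⟨n, fun x => F (φ x), fun x y => hF _ _⟩

theorem finset_sum {κ : Type*} (s : Finset κ) {f : κ → M → M → ℝ}
    (hf : ∀ k ∈ s, IsFinL1Dist (f k)) : IsFinL1Dist (fun x y => ∑ k ∈ s, f k x y) := by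
  classical
  induction s using Finset.induction_on with
  | empty => simpa using zero
  | insert k s hk ih =>
    simp only [sum_insert hk]
    exact (hf k (mem_insert_self k s)).add (ih fun j hj => hf j (mem_insert_of_mem hj))

theorem exists_Lp (hf : IsFinL1Dist f) :
    ∃ (Ω : Type) (_ : MeasurableSpace Ω) (μ : Measure Ω) (Ψ : M → Lp ℝ 1 μ),
      ∀ x y, ‖Ψ x - Ψ y‖ = f x y := by
  obtain ⟨n, G, hG⟩ := hf
  have hmem (x : M) : MemLp (G x) 1 (Measure.count : Measure (Fin n)) :=
    memLp_one_iff_integrable.2 .of_finite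
  refine ⟨Fin n, inferInstance, Measure.count, fun x => (hmem x).toLp (G x), fun x y => ?_⟩
  rw [← MemLp.toLp_sub, Lp.norm_toLp, eLpNorm_one_eq_lintegral_enorm, lintegral_count,
    tsum_fintype, ENNReal.toReal_sum (fun i _ => enorm_ne_top), hG]
  simp [Real.enorm_eq_ofReal_abs]

theorem embedsL1 (hg : IsFinL1Dist g) {K : ℝ} (hle : ∀ x y, f x y ≤ g x y)
    (hge : ∀ x y, g x y ≤ K * f x y) : EmbedsL1 f K := by
  obtain ⟨Ω, _, μ, Ψ, hΨ⟩ := hg.exists_Lp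
  exact ⟨Ω, _, μ, Ψ, fun x y => hΨ x y ▸ ⟨hle x y, hge x y⟩⟩

end IsFinL1Dist

def IsCutCombination {M : Type*} (ρ : M → M → ℝ) : Prop :=
  ∃ (n : ℕ) (c : Fin n → ℝ) (S : Fin n → M → Bool),
    (∀ k, 0 ≤ c k) ∧ ∀ x y, ρ x y = ∑ k, c k * if S k x = S k y then 0 else 1

namespace IsCutCombination

variable {M : Type*} {ρ : M → M → ℝ}

theorem of_fintype {κ : Type*} [Fintype κ] (c : κ → ℝ) (S : κ → M → Bool)
    (hc : ∀ k, 0 ≤ c k) (hρ : ∀ x y, ρ x y = ∑ k, c k * if S k x = S k y then 0 else 1) :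
    IsCutCombination ρ := by
  let e := Fintype.equivFin κ
  exact ⟨Fintype.card κ, fun k => c (e.symm k), fun k => S (e.symm k), fun k => hc _,
    fun x y => by rw [hρ, ← e.symm.sum_comp]⟩

theorem nonneg (hρ : IsCutCombination ρ) (x y : M) : 0 ≤ ρ x y := by
  obtain ⟨n, c, S, hc, hρ⟩ := hρ
  rw [hρ]
  exact sum_nonneg fun k _ => mul_nonneg (hc k) (by split_ifs <;> norm_num)

theorem div_const (hρ : IsCutCombination ρ) {θ : ℝ} (hθ : 0 ≤ θ) :
    IsCutCombination (fun x y => ρ x y / θ) := by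
  obtain ⟨n, c, S, hc, hρ⟩ := hρ
  exact ⟨n, fun k => c k / θ, S, fun k => div_nonneg (hc k) hθ, fun x y => by
    simp only [hρ, sum_div, div_mul_eq_mul_div]⟩

end IsCutCombination

theorem sum_prod_bool {κ : Type*} [Fintype κ] [DecidableEq κ] (f : κ → Bool → ℝ) :
    ∑ ε : κ → Bool, ∏ k, f k (ε k) = ∏ k, (f k true + f k false) := by
  simp only [← Fintype.sum_bool, Fintype.prod_sum]

theorem prod_ite_neg_one_eq_one_or {κ : Type*} [Fintype κ] (p : κ → Prop) [DecidablePred p] :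
    (∏ k, if p k then (-1 : ℝ) else 1) = 1 ∨ (∏ k, if p k then (-1 : ℝ) else 1) = -1 := by
  rw [← mul_self_eq_one_iff, ← prod_mul_distrib]
  exact prod_eq_one fun k _ => by split_ifs <;> norm_num

theorem IsCutCombination.isFinL1Dist_one_sub_exp_neg {M : Type*} {ρ : M → M → ℝ}
    (hρ : IsCutCombination ρ) : IsFinL1Dist (fun x y => 1 - exp (-ρ x y)) := by
  obtain ⟨n, c, S, hc, hρ⟩ := hρ
  set q : Fin n → ℝ := fun k => (1 - exp (-c k)) / 2
  set w : Fin n → Bool → ℝ := fun k b => if b then q k else 1 - q k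
  have hw : ∀ k b, 0 ≤ w k b := fun k b => by
    have : 0 < exp (-c k) := exp_pos _
    have : exp (-c k) ≤ 1 := exp_le_one_iff.2 (by linarith [hc k])
    cases b <;> simp only [w, q, Bool.false_eq_true, if_true, if_false] <;> linarith
  -- `ε` selects cut `k` with probability `q k`; `χ x ε = ±1` is the parity of the selected cuts
  -- with `x` on their `true` side
  set χ : M → (Fin n → Bool) → ℝ := fun x ε => ∏ k, if S k x && ε k then -1 else 1
  refine IsFinL1Dist.of_fintype (fun x ε => (∏ k, w k (ε k)) * χ x ε) fun x y => ?_
  set σ : Fin n → Bool → ℝ := fun k b =>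
    (if S k x && b then -1 else 1) * (if S k y && b then -1 else 1)
  have hterm (ε : Fin n → Bool) : |(∏ k, w k (ε k)) * χ x ε - (∏ k, w k (ε k)) * χ y ε|
      = ∏ k, w k (ε k) - ∏ k, w k (ε k) * σ k (ε k) := by
    have hsign : |χ x ε - χ y ε| = 1 - χ x ε * χ y ε := by
      rcases prod_ite_neg_one_eq_one_or (fun k => S k x && ε k) with hx | hx <;>
      rcases prod_ite_neg_one_eq_one_or (fun k => S k y && ε k) with hy | hy <;>
      simp only [χ, hx, hy] <;> norm_num
    rw [← mul_sub, abs_mul, abs_of_nonneg (prod_nonneg fun k _ => hw k _), hsign]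
    simp only [σ, χ, prod_mul_distrib]
    ring
  have hfactor (k : Fin n) :
      w k true * σ k true + w k false * σ k false =
        exp (-(c k * if S k x = S k y then 0 else 1)) := by
    cases hx : S k x <;> cases hy : S k y <;> simp [w, σ, q, hx, hy] <;> ring
  rw [sum_congr rfl fun ε _ => hterm ε, sum_sub_distrib, sum_prod_bool,
    sum_prod_bool (fun k b => w k b * σ k b), hρ, ← sum_neg_distrib, exp_sum]
  simp only [← hfactor, w, if_true, Bool.false_eq_true, if_false, add_sub_cancel, prod_const_one]

theorem lintegral_ite_decide_lt_eq (a b : ℝ) :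
    ∫⁻ t, (if decide (t < a) = decide (t < b) then 0 else 1) = ‖a - b‖ₑ := by
  wlog hab : a ≤ b generalizing a b
  · simpa [eq_comm, enorm_sub_rev] using this b a (le_of_not_ge hab)
  have hind : (fun t : ℝ => if decide (t < a) = decide (t < b) then (0 : ℝ≥0∞) else 1)
      = (Set.Ico a b).indicator 1 := by
    ext t
    by_cases hta : t < a <;> by_cases htb : t < b <;> simp [Set.indicator, hta, htb]
    linarith
  rw [hind, lintegral_indicator_one measurableSet_Ico, Real.volume_Ico,
    Real.enorm_eq_ofReal_abs, abs_sub_comm, abs_of_nonneg (sub_nonneg.2 hab)]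

theorem isCutCombination_norm_sub {Ω : Type*} [MeasurableSpace Ω] {μ : Measure Ω}
    {M : Type*} [Finite M] (f : M → Lp ℝ 1 μ) :
    IsCutCombination (fun x y => ‖f x - f y‖) := by
  classical
  have := Fintype.ofFinite M
  -- `P (ω, t)` separates `x` from `y` exactly when `t` lies between `f x ω` and `f y ω`
  let P : Ω × ℝ → M → Bool := fun q z => decide (q.2 < f z q.1)
  have hP : Measurable P := measurable_pi_lambda _ fun z => measurable_to_bool <| by
    convert measurableSet_lt measurable_snd
      ((Lp.stronglyMeasurable (f z)).measurable.comp measurable_fst) using 1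
    ext; simp [P]
  let ν := (μ.prod volume).map P
  let F : M → M → (M → Bool) → ℝ≥0∞ := fun x y S => if S x = S y then 0 else 1
  have key (x y : M) : ENNReal.ofReal ‖f x - f y‖ = ∑ S, F x y S * ν {S} := by
    calc ENNReal.ofReal ‖f x - f y‖ = ∫⁻ ω, ‖f x ω - f y ω‖ₑ ∂μ :=
          L1.ofReal_norm_sub_eq_lintegral _ _
      _ = ∫⁻ ω, (∫⁻ t : ℝ, F x y (P (ω, t))) ∂μ := by
          simp only [F, P, lintegral_ite_decide_lt_eq]
      _ = ∫⁻ q, F x y (P q) ∂(μ.prod volume) :=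
          (lintegral_prod (F x y ∘ P) ((measurable_of_finite _).comp hP).aemeasurable).symm
      _ = ∫⁻ S, F x y S ∂ν := (lintegral_map (measurable_of_finite _) hP).symm
      _ = ∑ S, F x y S * ν {S} := lintegral_fintype _
  refine IsCutCombination.of_fintype (fun S => (ν {S}).toReal) (fun S x => S x)
    (fun _ => ENNReal.toReal_nonneg) fun x y => ?_
  have hfin (S : M → Bool) : F x y S * ν {S} ≠ ∞ :=
    ne_top_of_le_ne_top (key x y ▸ ENNReal.ofReal_ne_top)
      (single_le_sum (f := fun S => F x y S * ν {S}) (fun _ _ => zero_le ..) (mem_univ S))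
  rw [← ENNReal.toReal_ofReal (norm_nonneg (f x - f y)), key,
    ENNReal.toReal_sum fun S _ => hfin S]
  refine sum_congr rfl fun S _ => ?_
  rw [ENNReal.toReal_mul, mul_comm]
  split_ifs <;> simp [F, *]

theorem ConcaveOn.monotoneOn_sub_slope_mul {u : ℝ → ℝ} (hu : ConcaveOn ℝ (Set.Ici 0) u)
    {N : Set ℝ} {c d : ℝ} (hN : N ⊆ Set.Icc 0 c) (hcd : c < d) :
    MonotoneOn (fun t => u t - slope u c d * t) N := by
  intro a ha b hb hab
  rcases hab.eq_or_lt with rfl | hab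
  · rfl
  obtain ⟨ha0, -⟩ := hN ha
  obtain ⟨-, hbc⟩ := hN hb
  have hd : (0 : ℝ) ≤ d := by linarith
  have hslope : slope u c d ≤ slope u a b :=
    calc slope u c d = slope u d c := slope_comm u c d
      _ ≤ slope u d a := hu.slope_anti (x := d) hd ⟨ha0, (by linarith : a ≠ d)⟩
          ⟨(by linarith : (0 : ℝ) ≤ c), (by linarith : c ≠ d)⟩ (by linarith)
      _ = slope u a d := slope_comm u d a
      _ ≤ slope u a b := hu.slope_anti (x := a) ha0 ⟨(by linarith : (0 : ℝ) ≤ b), hab.ne'⟩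
          ⟨hd, (by linarith : d ≠ a)⟩ (by linarith)
  rw [slope_def_field u a b, le_div_iff₀ (sub_pos.2 hab)] at hslope
  linarith

theorem mul_min_add_sum_mul_min_eq {T : Finset ℝ} {m m' s : ℝ} {u A : ℝ → ℝ}
    (hT : ∀ t ∈ insert 0 T, t ≤ m') (hm'm : m' < m) (hm' : m' ∈ insert 0 T)
    (hs : s * (m - m') = u m - u m')
    (hA : ∀ t ∈ insert 0 T, ∑ θ ∈ T, A θ * min t θ = u t - s * t) :
    ∀ t ∈ insert m (insert 0 T), s * min t m + ∑ θ ∈ T, A θ * min t θ = u t := by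
  intro t ht
  rcases Finset.mem_insert.1 ht with rfl | ht
  · have hmin : ∑ θ ∈ T, A θ * min t θ = ∑ θ ∈ T, A θ * min m' θ :=
      sum_congr rfl fun θ hθ => by
        have := hT θ (mem_insert_of_mem hθ)
        rw [min_eq_right (by linarith), min_eq_right this]
    rw [min_self, hmin, hA m' hm']
    linarith
  · rw [min_eq_left (by linarith [hT t ht]), hA t ht]
    ring

theorem ConcaveOn.exists_sum_mul_min_eq {u : ℝ → ℝ} (hu : ConcaveOn ℝ (Set.Ici 0) u)
    (hu0 : u 0 = 0) {T : Finset ℝ} (hT : ∀ θ ∈ T, 0 < θ) (hmono : MonotoneOn u ↑(insert 0 T)) :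
    ∃ A : ℝ → ℝ, (∀ θ ∈ T, 0 ≤ A θ) ∧ ∀ t ∈ insert 0 T, ∑ θ ∈ T, A θ * min t θ = u t := by
  induction T using Finset.induction_on_max generalizing u with
  | empty => exact ⟨0, by simp, by simp [hu0]⟩
  | insert m T hlt ih =>
  have hTpos : ∀ θ ∈ T, 0 < θ := fun θ hθ => hT θ (mem_insert_of_mem hθ)
  have hm : 0 < m := hT m (mem_insert_self m T)
  set m' := (insert 0 T).max' (insert_nonempty 0 T)
  have hm'mem : m' ∈ insert 0 T := max'_mem _ _
  have hle_m' : ∀ t ∈ insert 0 T, t ≤ m' := fun t ht => le_max' _ t ht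
  have hm'm : m' < m := (max'_lt_iff _ _).2 (by simpa [hm] using hlt)
  -- the top node carries the last slope `s` of the piecewise linear interpolant of `u`
  set s := slope u m' m with hs_def
  have hs_eq : s * (m - m') = u m - u m' := by
    rw [hs_def, slope_def_field]; exact div_mul_cancel₀ _ (sub_pos.2 hm'm).ne'
  have hs : 0 ≤ s := by
    have := hmono (mem_coe.2 (insert_subset_insert 0 (subset_insert m T) hm'mem)) (by simp)
      hm'm.le
    rw [hs_def, slope_def_field]; exact div_nonneg (by linarith) (by linarith)
  have hu' : ConcaveOn ℝ (Set.Ici 0) fun t => u t - s * t :=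
    hu.sub ((convexOn_id (convex_Ici 0)).smul hs)
  have hnodes : ↑(insert 0 T) ⊆ Set.Icc 0 m' := fun t ht => by
    refine ⟨?_, hle_m' t ht⟩
    rcases Finset.mem_insert.1 (mem_coe.1 ht) with rfl | ht
    exacts [le_rfl, (hTpos t ht).le]
  have hmono' := hu.monotoneOn_sub_slope_mul hnodes hm'm
  obtain ⟨A, hA, hAsum⟩ := ih hu' (by simp [hu0]) hTpos hmono'
  refine ⟨fun θ => if θ = m then s else A θ, fun θ hθ => ?_, fun t ht => ?_⟩
  · rcases Finset.mem_insert.1 hθ with rfl | hθ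
    · simpa using hs
    · simpa [(hlt θ hθ).ne] using hA θ hθ
  dsimp only
  rw [sum_insert fun h => (hlt m h).false, if_pos rfl,
    sum_congr rfl fun θ hθ => by rw [if_neg (hlt θ hθ).ne]]
  exact mul_min_add_sum_mul_min_eq hle_m' hm'm hm'mem hs_eq hAsum t (insert_comm 0 m T ▸ ht)

theorem one_sub_exp_neg_le_min (x : ℝ) : 1 - exp (-x) ≤ min x 1 :=
  le_min (by linarith [add_one_le_exp (-x)]) (by linarith [exp_pos (-x)])

theorem min_le_two_mul_one_sub_exp_neg {x : ℝ} (hx : 0 ≤ x) :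
    min x 1 ≤ 2 * (1 - exp (-x)) := by
  have he : exp (-1) ≤ 1 / 2 := by
    rw [exp_neg, inv_le_comm₀ (exp_pos 1) (by norm_num)]
    linarith [add_one_le_exp 1]
  rcases le_total x 1 with hx1 | hx1
  · have hconv := convexOn_exp.2 (Set.mem_univ 0) (Set.mem_univ (-1)) (sub_nonneg.2 hx1) hx
      (sub_add_cancel 1 x)
    simp only [smul_eq_mul, mul_zero, zero_add, mul_neg_one, exp_zero, mul_one] at hconv
    rw [min_eq_left hx1]
    nlinarith
  · rw [min_eq_right hx1]
    linarith [exp_le_exp.2 (neg_le_neg hx1)]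

theorem mul_one_sub_exp_neg_div_le_min (t : ℝ) {θ : ℝ} (hθ : 0 < θ) :
    θ * (1 - exp (-(t / θ))) ≤ min t θ := by
  have := one_sub_exp_neg_le_min (t / θ)
  calc θ * (1 - exp (-(t / θ))) ≤ θ * min (t / θ) 1 := by gcongr
    _ = min t θ := by rw [mul_min_of_nonneg _ _ hθ.le, mul_div_cancel₀ _ hθ.ne', mul_one]

theorem min_le_two_mul_mul_one_sub_exp_neg_div {t θ : ℝ} (ht : 0 ≤ t) (hθ : 0 < θ) :
    min t θ ≤ 2 * (θ * (1 - exp (-(t / θ)))) := by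
  have := min_le_two_mul_one_sub_exp_neg (div_nonneg ht hθ.le)
  calc min t θ = θ * min (t / θ) 1 := by
        rw [mul_min_of_nonneg _ _ hθ.le, mul_div_cancel₀ _ hθ.ne', mul_one]
    _ ≤ θ * (2 * (1 - exp (-(t / θ)))) := by gcongr
    _ = 2 * (θ * (1 - exp (-(t / θ)))) := by ring

theorem IsCutCombination.exists_isFinL1Dist_le_le {M : Type*} [Finite M] {ρ : M → M → ℝ}
    (hρ : IsCutCombination ρ) {u : ℝ → ℝ} (hu : ConcaveOn ℝ (Set.Ici 0) u)
    (hmono : MonotoneOn u (Set.Ici 0)) (hu0 : u 0 = 0) :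
    ∃ k : M → M → ℝ, IsFinL1Dist k ∧
      ∀ x y, u (ρ x y) ≤ k x y ∧ k x y ≤ 2 * u (ρ x y) := by
  classical
  have := Fintype.ofFinite M
  set T := (univ.image fun p : M × M => ρ p.1 p.2).filter (0 < ·)
  have hT : ∀ θ ∈ T, 0 < θ := fun θ hθ => (mem_filter.1 hθ).2
  have hρT (x y : M) : ρ x y ∈ insert 0 T := by
    rcases (hρ.nonneg x y).eq_or_lt with h | h
    · simp [← h]
    · exact mem_insert_of_mem (mem_filter.2 ⟨mem_image.2 ⟨(x, y), mem_univ _, rfl⟩, h⟩)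
  obtain ⟨A, hA, hAu⟩ := hu.exists_sum_mul_min_eq hu0 hT <| hmono.mono fun t ht => by
    rcases Finset.mem_insert.1 (mem_coe.1 ht) with rfl | ht
    exacts [le_refl (0 : ℝ), (hT t ht).le]
  refine ⟨fun x y => ∑ θ ∈ T, 2 * A θ * θ * (1 - exp (-(ρ x y / θ))), ?_,
    fun x y => ?_⟩
  · exact IsFinL1Dist.finset_sum T fun θ hθ =>
      (hρ.div_const (hT θ hθ).le).isFinL1Dist_one_sub_exp_neg.const_mul
        (by have := hA θ hθ; have := hT θ hθ; positivity)
  rw [← hAu _ (hρT x y), mul_sum]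
  constructor <;> refine sum_le_sum fun θ hθ => ?_
  · have := min_le_two_mul_mul_one_sub_exp_neg_div (hρ.nonneg x y) (hT θ hθ)
    calc A θ * min (ρ x y) θ ≤ A θ * (2 * (θ * (1 - exp (-(ρ x y / θ))))) :=
          mul_le_mul_of_nonneg_left this (hA θ hθ)
      _ = _ := by ring
  · have := mul_one_sub_exp_neg_div_le_min (ρ x y) (hT θ hθ)
    calc 2 * A θ * θ * (1 - exp (-(ρ x y / θ)))
          = 2 * (A θ * (θ * (1 - exp (-(ρ x y / θ))))) := by ring
      _ ≤ 2 * (A θ * min (ρ x y) θ) := by gcongr; exact hA θ hθ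

theorem ConcaveOn.le_add {u : ℝ → ℝ} (hu : ConcaveOn ℝ (Set.Ici 0) u) (hu0 : u 0 = 0)
    {a b : ℝ} (ha : 0 ≤ a) (hb : 0 ≤ b) : u (a + b) ≤ u a + u b := by
  rcases ha.eq_or_lt with rfl | ha
  · simp [hu0]
  rcases hb.eq_or_lt with rfl | hb
  · simp [hu0]
  -- `t ↦ u t / t` is antitone, since it is the slope of `u` from `0`
  have hslope {c : ℝ} (hc : 0 < c) (hca : c < a + b) : u (a + b) / (a + b) ≤ u c / c := by
    have := hu.slope_anti (x := 0) Set.self_mem_Ici ⟨hc.le, hc.ne'⟩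
      ⟨(by linarith : (0 : ℝ) ≤ a + b), (by linarith : a + b ≠ 0)⟩ hca.le
    simpa [slope_def_field, hu0] using this
  have h1 := hslope ha (by linarith)
  have h2 := hslope hb (by linarith)
  rw [div_le_div_iff₀ (by linarith) ha] at h1
  rw [div_le_div_iff₀ (by linarith) hb] at h2
  nlinarith

structure IsPseudoDist {M : Type*} (d : M → M → ℝ) : Prop where
  self : ∀ x, d x x = 0
  symm : ∀ x y, d x y = d y x
  triangle : ∀ x y z, d x y ≤ d x z + d z y

namespace IsPseudoDist

variable {M : Type*} {d : M → M → ℝ}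

theorem nonneg (hd : IsPseudoDist d) (x y : M) : 0 ≤ d x y := by
  have := hd.triangle x x y
  rw [hd.self, hd.symm y x] at this
  linarith

theorem norm_sub {E : Type*} [SeminormedAddCommGroup E] (f : M → E) :
    IsPseudoDist (fun x y => ‖f x - f y‖) :=
  ⟨fun _ => by simp, fun _ _ => norm_sub_rev _ _,
    fun _ _ _ => norm_sub_le_norm_sub_add_norm_sub _ _ _⟩

theorem comp_concave (hd : IsPseudoDist d) {u : ℝ → ℝ} (hu : ConcaveOn ℝ (Set.Ici 0) u)
    (hmono : MonotoneOn u (Set.Ici 0)) (hu0 : u 0 = 0) : IsPseudoDist (fun x y => u (d x y)) where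
  self x := by simp [hd.self, hu0]
  symm x y := by rw [hd.symm]
  triangle x y z := (hmono (hd.nonneg x y) (add_nonneg (hd.nonneg x z) (hd.nonneg z y))
      (hd.triangle x y z)).trans (hu.le_add hu0 (hd.nonneg x z) (hd.nonneg z y))

end IsPseudoDist

theorem le_add_and_add_le_of_min_le {a b k km r : ℝ} (ha : 0 ≤ a) (hab : a ≤ b + 2 * r)
    (hk : min a (2 * r) ≤ k ∧ k ≤ 2 * min a (2 * r)) (hkm : min a b ≤ km ∧ km ≤ 2 * min a b) :
    a ≤ k + km ∧ k + km ≤ 13 * a := by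
  constructor
  · rcases min_cases a (2 * r) with ⟨h, _⟩ | ⟨h, _⟩ <;>
      rcases min_cases a b with ⟨h', _⟩ | ⟨h', _⟩ <;> linarith
  · linarith [min_le_left a (2 * r), min_le_left a b]

theorem le_add_and_add_le_of_max_le {D m r k k' km : ℝ} (hlow : max r (m - r) ≤ D)
    (hup : D ≤ m + r) (hk : 0 ≤ k ∧ k ≤ 4 * r) (hk' : 0 ≤ k' ∧ k' ≤ 4 * r)
    (hkm : m ≤ km ∧ km ≤ 2 * m) : D ≤ r + k + k' + km ∧ r + k + k' + km ≤ 13 * D := by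
  rw [max_le_iff] at hlow
  -- `13 D ≥ 11 r + 2 (m - r) = 9 r + 2 m`
  constructor <;> linarith

section TwistedUnion

variable {M : Type*} {d0 d1 : M → M → ℝ} {r : ℝ}

theorem max_le_iInf_twisted (h0 : IsPseudoDist d0) (h1 : IsPseudoDist d1)
    (hband : ∀ x y, |d0 x y - d1 x y| ≤ 2 * r) (x y : M) :
    max r (min (d0 x y) (d1 x y) - r) ≤ ⨅ z, d0 x z + d1 z y + r := by
  have : Nonempty M := ⟨x⟩
  refine le_ciInf fun z => max_le ?_ ?_
  · linarith [h0.nonneg x z, h1.nonneg z y]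
  · have := h0.triangle x y z
    have := (abs_le.1 (hband z y)).2
    linarith [min_le_left (d0 x y) (d1 x y)]

theorem iInf_twisted_le (h0 : IsPseudoDist d0) (h1 : IsPseudoDist d1) (x y : M) :
    ⨅ z, d0 x z + d1 z y + r ≤ min (d0 x y) (d1 x y) + r := by
  have hbdd : BddBelow (Set.range fun z => d0 x z + d1 z y + r) :=
    ⟨r, by rintro _ ⟨z, rfl⟩; linarith [h0.nonneg x z, h1.nonneg z y]⟩
  rw [← min_add_add_right]
  refine le_min ?_ ?_
  · simpa [h1.self] using ciInf_le hbdd y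
  · simpa [h0.self] using ciInf_le hbdd x

/-- The copy `M × {false}` uses the `k0`-coordinates at `x` and pins the `k1`-coordinates at
`x₀`, the copy `M × {true}` does the reverse; the `km`-coordinates are shared and an extra
coordinate separates the two copies by `r`. -/
def twistedSum (k0 k1 km : M → M → ℝ) (r : ℝ) (x₀ : M) (a b : M × Bool) : ℝ :=
  |(if a.2 then r else 0) - (if b.2 then r else 0)| + k0 (cond a.2 x₀ a.1) (cond b.2 x₀ b.1)
    + k1 (cond a.2 a.1 x₀) (cond b.2 b.1 x₀) + km a.1 b.1

theorem IsFinL1Dist.twistedSum {k0 k1 km : M → M → ℝ} (hk0 : IsFinL1Dist k0)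
    (hk1 : IsFinL1Dist k1) (hkm : IsFinL1Dist km) (r : ℝ) (x₀ : M) :
    IsFinL1Dist (twistedSum k0 k1 km r x₀) :=
  (((IsFinL1Dist.abs_sub fun a : M × Bool => if a.2 then r else 0).add
    (hk0.comp fun a : M × Bool => cond a.2 x₀ a.1)).add
    (hk1.comp fun a : M × Bool => cond a.2 a.1 x₀)).add
    (hkm.comp Prod.fst)

theorem twistedDist_le_twistedSum_le (h0 : IsPseudoDist d0) (h1 : IsPseudoDist d1)
    (hband : ∀ x y, |d0 x y - d1 x y| ≤ 2 * r) (hr : 0 ≤ r) {k0 k1 km : M → M → ℝ}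
    (hk0 : ∀ x y, min (d0 x y) (2 * r) ≤ k0 x y ∧ k0 x y ≤ 2 * min (d0 x y) (2 * r))
    (hk1 : ∀ x y, min (d1 x y) (2 * r) ≤ k1 x y ∧ k1 x y ≤ 2 * min (d1 x y) (2 * r))
    (hkm : ∀ x y, min (d0 x y) (d1 x y) ≤ km x y ∧ km x y ≤ 2 * min (d0 x y) (d1 x y))
    (x₀ : M) (a b : M × Bool) :
    twistedDist d0 d1 (fun _ => r) a b ≤ twistedSum k0 k1 km r x₀ a b ∧
      twistedSum k0 k1 km r x₀ a b ≤ 13 * twistedDist d0 d1 (fun _ => r) a b := by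
  have hk0r x y : 0 ≤ k0 x y ∧ k0 x y ≤ 4 * r :=
    ⟨(le_min (h0.nonneg x y) (by linarith)).trans (hk0 x y).1,
      by linarith [(hk0 x y).2, min_le_right (d0 x y) (2 * r)]⟩
  have hk1r x y : 0 ≤ k1 x y ∧ k1 x y ≤ 4 * r :=
    ⟨(le_min (h1.nonneg x y) (by linarith)).trans (hk1 x y).1,
      by linarith [(hk1 x y).2, min_le_right (d1 x y) (2 * r)]⟩
  have hk0self x : k0 x x = 0 :=
    le_antisymm (by simpa [h0.self, min_eq_left (by linarith : 0 ≤ 2 * r)] using (hk0 x x).2)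
      (hk0r x x).1
  have hk1self x : k1 x x = 0 :=
    le_antisymm (by simpa [h1.self, min_eq_left (by linarith : 0 ≤ 2 * r)] using (hk1 x x).2)
      (hk1r x x).1
  obtain ⟨x, i⟩ := a
  obtain ⟨y, j⟩ := b
  cases i <;> cases j <;>
    simp only [twistedDist, twistedSum, cond_false, cond_true, if_true, if_false,
      Bool.false_eq_true, sub_self, abs_zero, zero_sub, sub_zero, abs_neg, abs_of_nonneg hr,
      hk0self, hk1self, zero_add, add_zero]
  · exact le_add_and_add_le_of_min_le (h0.nonneg x y)
      (by linarith [(abs_le.1 (hband x y)).2]) (hk0 x y) (hkm x y)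
  · exact le_add_and_add_le_of_max_le (max_le_iInf_twisted h0 h1 hband x y)
      (iInf_twisted_le h0 h1 x y) (hk0r x x₀) (hk1r x₀ y) (hkm x y)
  · have hlow := max_le_iInf_twisted h0 h1 hband y x
    have hup := iInf_twisted_le (r := r) h0 h1 y x
    rw [h0.symm y x, h1.symm y x] at hlow hup
    exact le_add_and_add_le_of_max_le hlow hup (hk0r x₀ y) (hk1r x x₀) (hkm x y)
  · have hkm' := hkm x y
    rw [min_comm] at hkm'
    exact le_add_and_add_le_of_min_le (h1.nonneg x y)
      (by linarith [(abs_le.1 (hband x y)).1]) (hk1 x y) hkm'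

end TwistedUnion

/-- Corollary 4.3: there is a universal constant `D < 26.6` bounding the
`L₁`-distortion of every `r`-twisted union of a finite subset of `L₁` equipped
with two metrics of the form `ϖᵢ(‖x - y‖₁)`, where the `ϖᵢ` are concave
non-decreasing continuous functions vanishing only at `0` with
`|ϖ₀ - ϖ₁| ≤ 2r`. -/
theorem twisted_union_of_concave_moduli_embeds_L1 :
    ∃ D : ℝ, D < 26.6 ∧
      ∀ (Ω : Type) [inst : MeasurableSpace Ω] (μ : Measure Ω)
        (s : Set (Lp ℝ 1 μ)), s.Finite → s.Nonempty →
        ∀ (r : ℝ), 0 < r →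
        ∀ (w0 w1 : ℝ → ℝ),
          ConcaveOn ℝ (Set.Ici 0) w0 → MonotoneOn w0 (Set.Ici 0) →
          ContinuousOn w0 (Set.Ici 0) → w0 0 = 0 → (∀ t > 0, 0 < w0 t) →
          ConcaveOn ℝ (Set.Ici 0) w1 → MonotoneOn w1 (Set.Ici 0) →
          ContinuousOn w1 (Set.Ici 0) → w1 0 = 0 → (∀ t > 0, 0 < w1 t) →
          (∀ t ≥ (0 : ℝ), |w0 t - w1 t| ≤ 2 * r) →
          EmbedsL1
            (twistedDist (fun x y : s => w0 ‖(x : Lp ℝ 1 μ) - (y : Lp ℝ 1 μ)‖)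
                         (fun x y : s => w1 ‖(x : Lp ℝ 1 μ) - (y : Lp ℝ 1 μ)‖)
                         (fun _ => r)) D := by
  refine ⟨13, by norm_num, ?_⟩
  intro Ω _ μ s hs ⟨x₀, hx₀⟩ r hr w0 w1 hc0 hm0 _ h00 _ hc1 hm1 _ h10 _ hband
  have := hs.to_subtype
  have hρ : IsCutCombination fun x y : s => ‖(x : Lp ℝ 1 μ) - y‖ :=
    isCutCombination_norm_sub Subtype.val
  have hρd := IsPseudoDist.norm_sub (Subtype.val : s → Lp ℝ 1 μ)
  have hcr : ConcaveOn ℝ (Set.Ici (0 : ℝ)) fun _ => 2 * r := concaveOn_const _ (convex_Ici 0)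
  obtain ⟨k0, hk0, hk0u⟩ := hρ.exists_isFinL1Dist_le_le (hc0.inf hcr)
    (hm0.min monotoneOn_const) (by simp [h00, hr.le])
  obtain ⟨k1, hk1, hk1u⟩ := hρ.exists_isFinL1Dist_le_le (hc1.inf hcr)
    (hm1.min monotoneOn_const) (by simp [h10, hr.le])
  obtain ⟨km, hkm, hkmu⟩ := hρ.exists_isFinL1Dist_le_le (hc0.inf hc1) (hm0.min hm1)
    (by simp [h00, h10])
  have hcmp := twistedDist_le_twistedSum_le (hρd.comp_concave hc0 hm0 h00)
    (hρd.comp_concave hc1 hm1 h10) (fun x y => hband _ (hρd.nonneg x y)) hr.le hk0u hk1u hkmu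
    (⟨x₀, hx₀⟩ : s)
  exact (hk0.twistedSum hk1 hkm r _).embedsL1 (fun a b => (hcmp a b).1) (fun a b => (hcmp a b).2)
end

section
/- Let (X,d) be a metric space, let (x_n) and (y_m) be sequences in X, and let 𝒰 and 𝒱 be free (non-principal) ultrafilters on ℕ. Suppose S_m, L_n, S, L are real numbers such that: for every m, d(x_n, y_m) converges to S_m along 𝒰 (as n → ∞ along 𝒰); S_m converges to S along 𝒱; for every n, d(x_n, y_m) converges to L_n along 𝒱; and L_n converges to L along 𝒰. Then S ≤ 3L. -/
open Filter

/-- Proposition 6.6: for bounded double sequences of distances in a metric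
space, the iterated ultrafilter limits satisfy `S ≤ 3L`. -/
theorem iterated_ultrafilter_limits_le_three_mul
    {X : Type*} [MetricSpace X] (x y : ℕ → X)
    (U V : Ultrafilter ℕ)
    (hU : (U : Filter ℕ) ≤ Filter.cofinite)
    (hV : (V : Filter ℕ) ≤ Filter.cofinite)
    (Sm Ln : ℕ → ℝ) (S L : ℝ)
    (hSm : ∀ m, Tendsto (fun n => dist (x n) (y m)) (U : Filter ℕ) (nhds (Sm m)))
    (hS : Tendsto Sm (V : Filter ℕ) (nhds S))
    (hLn : ∀ n, Tendsto (fun m => dist (x n) (y m)) (V : Filter ℕ) (nhds (Ln n)))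
    (hL : Tendsto Ln (U : Filter ℕ) (nhds L)) :
    S ≤ 3 * L := by
  refine le_of_forall_pos_le_add fun ε hε => ?_
  set δ : ℝ := ε / 9 with hδdef
  have hδ : 0 < δ := by positivity
  -- pick m with Sm m > S - δ
  obtain ⟨m, hm⟩ := (hS.eventually (eventually_gt_nhds (show S - δ < S by linarith))).exists
  -- pick n with dist (x n) (y m) > S - 2δ and Ln n < L + δ
  obtain ⟨n, hn1, hn2⟩ :=
    (((hSm m).eventually (eventually_gt_nhds (show S - 2*δ < Sm m by linarith))).and
      (hL.eventually (eventually_lt_nhds (show L < L + δ by linarith)))).exists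
  -- pick m' with dist (x n) (y m') < L + 2δ and Sm m' > S - δ
  obtain ⟨m', hm'1, hm'2⟩ :=
    (((hLn n).eventually (eventually_lt_nhds (show Ln n < L + 2*δ by linarith))).and
      (hS.eventually (eventually_gt_nhds (show S - δ < S by linarith)))).exists
  -- pick n' with dist (x n') (y m') > S - 2δ and Ln n' < L + δ
  obtain ⟨n', hn'1, hn'2⟩ :=
    (((hSm m').eventually (eventually_gt_nhds (show S - 2*δ < Sm m' by linarith))).and
      (hL.eventually (eventually_lt_nhds (show L < L + δ by linarith)))).exists
  -- pick m'' with dist (x n') (y m'') < L + 2δ and dist (x n) (y m'') < L + 2δ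
  obtain ⟨m'', hm''1, hm''2⟩ :=
    (((hLn n').eventually (eventually_lt_nhds (show Ln n' < L + 2*δ by linarith))).and
      ((hLn n).eventually (eventually_lt_nhds (show Ln n < L + 2*δ by linarith)))).exists
  have htri : dist (x n') (y m') ≤
      dist (x n') (y m'') + dist (x n) (y m'') + dist (x n) (y m') := by
    calc dist (x n') (y m') ≤ dist (x n') (y m'') + dist (y m'') (y m') :=
          dist_triangle _ _ _
      _ ≤ dist (x n') (y m'') + (dist (y m'') (x n) + dist (x n) (y m')) := by
          gcongr; exact dist_triangle _ _ _
      _ = dist (x n') (y m'') + dist (x n) (y m'') + dist (x n) (y m') := by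
          rw [dist_comm (y m'') (x n)]; ring
  linarith
end

section
/- There exists a map T from L1(ℝ) (real-valued integrable functions on ℝ with Lebesgue measure) into L2(ℝ × ℝ) (real-valued square-integrable functions on ℝ × ℝ with Lebesgue measure) such that for all f, g ∈ L1(ℝ), ‖T(f) − T(g)‖_{L2}² = ‖f − g‖_{L1}; equivalently, the metric space (L1(ℝ), ‖f − g‖₁^{1/2}) embeds isometrically into a Hilbert space. One such map is T(f)(t,s) = 1 if 0 < s ≤ f(t), T(f)(t,s) = −1 if f(t) < s < 0, and T(f)(t,s) = 0 otherwise. -/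
/-!
Send `f` to the signed indicator of the region between its graph and the horizontal axis.
For reals `a ≤ b` the slices `signedLayer b` and `signedLayer a` differ exactly by the indicator
of `(a, b]` (away from `s = 0`), so their squared `L²` distance is `|a - b|`. Integrating over the
first variable (Fubini) turns `‖T f - T g‖₂²` into `∫ |f - g| = ‖f - g‖₁`.
-/

open MeasureTheory Set

noncomputable def signedLayer (a s : ℝ) : ℝ :=
  (Ioc 0 a).indicator 1 s - (Ioo a 0).indicator 1 s

@[simp]
lemma signedLayer_zero_left (s : ℝ) : signedLayer 0 s = 0 := by
  simp [signedLayer]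

lemma measurable_signedLayer : Measurable (Function.uncurry signedLayer) := by
  refine .sub (.indicator measurable_const ?_) (.indicator measurable_const ?_)
  · exact (measurableSet_lt measurable_const measurable_snd).inter
      (measurableSet_le measurable_snd measurable_fst)
  · exact (measurableSet_lt measurable_fst measurable_snd).inter
      (measurableSet_lt measurable_snd measurable_const)

lemma signedLayer_sub_signedLayer_of_le {a b s : ℝ} (hab : a ≤ b) (hs : s ≠ 0) :
    signedLayer b s - signedLayer a s = (Ioc a b).indicator 1 s := by
  simp only [signedLayer, indicator_apply, mem_Ioc, mem_Ioo, Pi.one_apply]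
  split_ifs <;> grind

lemma sq_signedLayer_sub_of_le {a b s : ℝ} (hab : a ≤ b) (hs : s ≠ 0) :
    (signedLayer a s - signedLayer b s) ^ 2 = (Ioc a b).indicator 1 s := by
  rw [← neg_sub, neg_sq, signedLayer_sub_signedLayer_of_le hab hs]
  by_cases h : s ∈ Ioc a b <;> simp [h]

lemma sq_signedLayer_sub_ae_eq (a b : ℝ) :
    (fun s => (signedLayer a s - signedLayer b s) ^ 2) =ᵐ[volume] (uIoc a b).indicator 1 := by
  filter_upwards [compl_mem_ae_iff.2 (measure_singleton (0 : ℝ))] with s hs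
  rcases le_total a b with hab | hba
  · rw [uIoc_of_le hab, sq_signedLayer_sub_of_le hab hs]
  · rw [uIoc_of_ge hba, ← neg_sub, neg_sq, sq_signedLayer_sub_of_le hba hs]

lemma integral_sq_signedLayer_sub (a b : ℝ) :
    ∫ s, (signedLayer a s - signedLayer b s) ^ 2 = |a - b| := by
  rw [integral_congr_ae (sq_signedLayer_sub_ae_eq a b), integral_indicator_one measurableSet_uIoc,
    measureReal_def, Real.volume_uIoc, ENNReal.toReal_ofReal (abs_nonneg _), abs_sub_comm]

lemma integrable_sq_signedLayer_sub (a b : ℝ) :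
    Integrable (fun s => (signedLayer a s - signedLayer b s) ^ 2) := by
  refine (integrable_congr (sq_signedLayer_sub_ae_eq a b)).2 ?_
  exact (integrable_indicator_iff measurableSet_uIoc).2
    (integrableOn_const (by simp [Real.volume_uIoc]))

lemma MeasureTheory.L2.norm_toLp_sq {β : Type*} [MeasurableSpace β] {ν : Measure β}
    {F : β → ℝ} (hF : MemLp F 2 ν) : ‖hF.toLp F‖ ^ 2 = ∫ x, F x ^ 2 ∂ν := by
  rw [← real_inner_self_eq_norm_sq, L2.inner_def]
  refine integral_congr_ae (hF.coeFn_toLp.mono fun x hx => ?_)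
  simp [hx, sq]

section

variable {α : Type*} [MeasurableSpace α] {μ : Measure α} {f g : α → ℝ}

noncomputable def layerMap (f : α → ℝ) (p : α × ℝ) : ℝ := signedLayer (f p.1) p.2

lemma aemeasurable_layerMap (hf : AEMeasurable f μ) : AEMeasurable (layerMap f) (μ.prod volume) :=
  measurable_signedLayer.comp_aemeasurable
    ((hf.comp_quasiMeasurePreserving Measure.quasiMeasurePreserving_fst).prodMk
      measurable_snd.aemeasurable)

lemma integrable_sq_layerMap_sub (hf : Integrable f μ) (hg : Integrable g μ) :
    Integrable (fun p => (layerMap f p - layerMap g p) ^ 2) (μ.prod volume) := by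
  have hmeas :
      AEStronglyMeasurable (fun p => (layerMap f p - layerMap g p) ^ 2) (μ.prod volume) :=
    (((aemeasurable_layerMap hf.aemeasurable).sub
      (aemeasurable_layerMap hg.aemeasurable)).pow_const 2).aestronglyMeasurable
  refine (integrable_prod_iff hmeas).2 ⟨.of_forall fun x => ?_, ?_⟩
  · exact integrable_sq_signedLayer_sub (f x) (g x)
  · refine ((hf.sub hg).abs.congr (.of_forall fun x => ?_))
    simp only [norm_pow, Real.norm_eq_abs, sq_abs, layerMap, integral_sq_signedLayer_sub,
      Pi.sub_apply]

lemma memLp_layerMap (hf : Integrable f μ) : MemLp (layerMap f) 2 (μ.prod volume) := by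
  refine (memLp_two_iff_integrable_sq
    (aemeasurable_layerMap hf.aemeasurable).aestronglyMeasurable).2 ?_
  simpa [layerMap] using integrable_sq_layerMap_sub hf (integrable_zero α ℝ μ)

noncomputable def layerEmbedding (f : Lp ℝ 1 μ) : Lp ℝ 2 (μ.prod (volume : Measure ℝ)) :=
  (memLp_layerMap (L1.integrable_coeFn f)).toLp _

variable [SFinite μ]

lemma integral_sq_layerMap_sub (hf : Integrable f μ) (hg : Integrable g μ) :
    ∫ p, (layerMap f p - layerMap g p) ^ 2 ∂(μ.prod volume) = ∫ x, |f x - g x| ∂μ := by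
  rw [integral_prod _ (integrable_sq_layerMap_sub hf hg)]
  simp only [layerMap, integral_sq_signedLayer_sub]

theorem norm_layerEmbedding_sub_sq (f g : Lp ℝ 1 μ) :
    ‖layerEmbedding f - layerEmbedding g‖ ^ 2 = ‖f - g‖ := by
  have hf := L1.integrable_coeFn f
  have hg := L1.integrable_coeFn g
  rw [layerEmbedding, layerEmbedding, ← MemLp.toLp_sub, L2.norm_toLp_sq,
    L1.norm_eq_integral_norm]
  refine (integral_sq_layerMap_sub hf hg).trans (integral_congr_ae ?_)
  filter_upwards [Lp.coeFn_sub f g] with x hx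
  rw [hx, Pi.sub_apply, Real.norm_eq_abs]

end

/-- Observation 6.2 (Schoenberg): there is a map `T : L₁(ℝ) → L₂(ℝ × ℝ)` with
`‖T f - T g‖₂² = ‖f - g‖₁` for all `f, g`; that is, the metric space
`(L₁(ℝ), ‖f - g‖₁^{1/2})` embeds isometrically into a Hilbert space. -/
theorem L1_snowflake_embeds_in_Hilbert :
    ∃ T : Lp ℝ 1 (volume : Measure ℝ) → Lp ℝ 2 (volume : Measure (ℝ × ℝ)),
      ∀ f g, ‖T f - T g‖ ^ 2 = ‖f - g‖ :=
  ⟨layerEmbedding, norm_layerEmbedding_sub_sq⟩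
end

section
/- L1 is stable: let (Ω, μ) be a measure space, let (f_n) and (g_m) be bounded sequences in L1(μ), and let 𝒰 and 𝒱 be free ultrafilters on ℕ. Suppose S_m, L_n, S, L are real numbers such that: for every m, ‖f_n − g_m‖₁ converges to S_m along 𝒰; S_m converges to S along 𝒱; for every n, ‖f_n − g_m‖₁ converges to L_n along 𝒱; and L_n converges to L along 𝒰. Then S = L; that is, lim_{n,𝒰} lim_{m,𝒱} ‖f_n − g_m‖₁ = lim_{m,𝒱} lim_{n,𝒰} ‖f_n − g_m‖₁. -/
/-!
The map sending `f ∈ L¹(μ)` to the signed indicator of the region between `0` and the graph of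
`f`, i.e. `(ω, u) ↦ 1_{u < f ω} - 1_{u < 0}`, lands in `L²(μ × Lebesgue)` and satisfies
`‖Φ f - Φ g‖₂² = ‖f - g‖₁`. So it suffices to prove stability for squared distances in a Hilbert
space. There, `‖ξ - η‖² = ‖ξ‖² + ‖η‖² - 2⟪ξ, η⟫`; passing to the ultrafilter limits of the
squared norms and to weak limits `z`, `w` of the two sequences (bounded sets are weakly compact),
both iterated limits equal `a + b - 2⟪z, w⟫`.
-/

open MeasureTheory Filter Set Topology RealInnerProductSpace

lemma IsCompact.exists_tendsto_ultrafilter {X ι : Type*} [TopologicalSpace X] {s : Set X}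
    (hs : IsCompact s) (U : Ultrafilter ι) {x : ι → X} (hx : ∀ i, x i ∈ s) :
    ∃ a ∈ s, Tendsto x U (𝓝 a) :=
  hs.ultrafilter_le_nhds (U.map x) (le_principal_iff.2 (Ultrafilter.mem_map.2 (univ_mem' hx)))

section Hilbert

variable {H ι κ : Type*} [NormedAddCommGroup H] [InnerProductSpace ℝ H] [CompleteSpace H]

lemma exists_tendsto_inner_ultrafilter (U : Ultrafilter ι) {ξ : ι → H} {C : ℝ}
    (hC : ∀ i, ‖ξ i‖ ≤ C) : ∃ z : H, ∀ y, Tendsto (fun i => ⟪ξ i, y⟫) U (𝓝 ⟪z, y⟫) := by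
  obtain ⟨φ, -, hφ⟩ := (WeakDual.isCompact_closedBall 0 C).exists_tendsto_ultrafilter U
    (x := fun i => StrongDual.toWeakDual (InnerProductSpace.toDual ℝ H (ξ i)))
    (fun i => by simpa using hC i)
  refine ⟨(InnerProductSpace.toDual ℝ H).symm (WeakDual.toStrongDual φ), fun y => ?_⟩
  rw [InnerProductSpace.toDual_symm_apply]
  exact ((WeakDual.eval_continuous y).tendsto φ).comp hφ

theorem iterated_ultrafilter_lim_norm_sub_sq_comm {U : Ultrafilter ι} {V : Ultrafilter κ}
    {ξ : ι → H} {η : κ → H} (hξ : ∃ C, ∀ i, ‖ξ i‖ ≤ C) (hη : ∃ C, ∀ j, ‖η j‖ ≤ C)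
    {S L : ℝ} {s : κ → ℝ} {l : ι → ℝ}
    (hs : ∀ j, Tendsto (fun i => ‖ξ i - η j‖ ^ 2) U (𝓝 (s j))) (hS : Tendsto s V (𝓝 S))
    (hl : ∀ i, Tendsto (fun j => ‖ξ i - η j‖ ^ 2) V (𝓝 (l i))) (hL : Tendsto l U (𝓝 L)) :
    S = L := by
  obtain ⟨C, hC⟩ := hξ
  obtain ⟨D, hD⟩ := hη
  obtain ⟨a, -, ha⟩ := (isCompact_Icc (a := 0) (b := C ^ 2)).exists_tendsto_ultrafilter U
    (x := fun i => ‖ξ i‖ ^ 2) fun i => ⟨by positivity, pow_le_pow_left₀ (norm_nonneg _) (hC i) 2⟩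
  obtain ⟨b, -, hb⟩ := (isCompact_Icc (a := 0) (b := D ^ 2)).exists_tendsto_ultrafilter V
    (x := fun j => ‖η j‖ ^ 2) fun j => ⟨by positivity, pow_le_pow_left₀ (norm_nonneg _) (hD j) 2⟩
  obtain ⟨z, hz⟩ := exists_tendsto_inner_ultrafilter U hC
  obtain ⟨w, hw⟩ := exists_tendsto_inner_ultrafilter V hD
  have expand : ∀ i j, ‖ξ i - η j‖ ^ 2 = ‖ξ i‖ ^ 2 + ‖η j‖ ^ 2 - 2 * ⟪ξ i, η j⟫ := fun i j => by
    rw [norm_sub_sq_real]; ring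
  have hs' : ∀ j, s j = a + ‖η j‖ ^ 2 - 2 * ⟪z, η j⟫ := fun j => by
    refine tendsto_nhds_unique (hs j) ?_
    simp only [expand]
    exact (ha.add_const _).sub ((hz (η j)).const_mul 2)
  have hl' : ∀ i, l i = ‖ξ i‖ ^ 2 + b - 2 * ⟪w, ξ i⟫ := fun i => by
    refine tendsto_nhds_unique (hl i) ?_
    simp only [expand, real_inner_comm (η _) (ξ i)]
    exact (hb.const_add _).sub ((hw (ξ i)).const_mul 2)
  have hS' : Tendsto s V (𝓝 (a + b - 2 * ⟪w, z⟫)) := by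
    refine ((hb.const_add a).sub ((hw z).const_mul 2)).congr fun j => ?_
    rw [hs', real_inner_comm]
  have hL' : Tendsto l U (𝓝 (a + b - 2 * ⟪z, w⟫)) := by
    refine ((ha.add_const b).sub ((hz w).const_mul 2)).congr fun i => ?_
    rw [hl', real_inner_comm]
  rw [tendsto_nhds_unique hS hS', tendsto_nhds_unique hL hL', real_inner_comm]

end Hilbert

lemma enorm_indicator_Iio_sub_sq (x y u : ℝ) :
    ‖(Iio x).indicator (1 : ℝ → ℝ) u - (Iio y).indicator 1 u‖ₑ ^ 2
      = (Ico (min x y) (max x y)).indicator 1 u := by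
  simp only [indicator, mem_Iio, mem_Ico, inf_le_iff, lt_sup_iff, Pi.one_apply]
  split_ifs <;> (try simp) <;> grind

lemma lintegral_enorm_indicator_Iio_sub_sq (x y : ℝ) :
    ∫⁻ u, ‖(Iio x).indicator (1 : ℝ → ℝ) u - (Iio y).indicator 1 u‖ₑ ^ 2 = ‖x - y‖ₑ := by
  simp only [enorm_indicator_Iio_sub_sq]
  rw [lintegral_indicator_one measurableSet_Ico, Real.volume_Ico, max_sub_min_eq_abs,
    Real.enorm_eq_ofReal_abs, abs_sub_comm]

lemma sq_norm_toLp_two {α E : Type*} [MeasurableSpace α] [NormedAddCommGroup E] {ν : Measure α}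
    {F : α → E} (hF : MemLp F 2 ν) : ‖hF.toLp F‖ ^ 2 = (∫⁻ x, ‖F x‖ₑ ^ 2 ∂ν).toReal := by
  rw [Lp.norm_toLp, ← ENNReal.toReal_pow, ← ENNReal.coe_ofNat,
    eLpNorm_nnreal_eq_lintegral two_ne_zero, ← ENNReal.rpow_natCast, ← ENNReal.rpow_mul]
  norm_num

section SubgraphEmbedding

variable {Ω : Type*} [MeasurableSpace Ω] {μ : Measure Ω}

noncomputable def signedSubgraphIndicator (v : Ω → ℝ) (p : Ω × ℝ) : ℝ :=
  (Iio (v p.1)).indicator 1 p.2 - (Iio 0).indicator 1 p.2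

lemma measurable_signedSubgraphIndicator {v : Ω → ℝ} (hv : Measurable v) :
    Measurable (signedSubgraphIndicator v) := by
  refine Measurable.sub ?_ (measurable_const.indicator measurableSet_Iio |>.comp measurable_snd)
  exact measurable_const.indicator (measurableSet_lt measurable_snd (hv.comp measurable_fst))

lemma lintegral_enorm_signedSubgraphIndicator_sub_sq {v w : Ω → ℝ} (hv : Measurable v)
    (hw : Measurable w) :
    ∫⁻ p, ‖(signedSubgraphIndicator v - signedSubgraphIndicator w) p‖ₑ ^ 2 ∂μ.prod volume
      = ∫⁻ ω, ‖v ω - w ω‖ₑ ∂μ := by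
  rw [lintegral_prod _ (((measurable_signedSubgraphIndicator hv).sub
    (measurable_signedSubgraphIndicator hw)).enorm.pow_const 2).aemeasurable]
  simp only [Pi.sub_apply, signedSubgraphIndicator, sub_sub_sub_cancel_right,
    lintegral_enorm_indicator_Iio_sub_sq]

lemma lintegral_enorm_signedSubgraphIndicator_sq {v : Ω → ℝ} (hv : Measurable v) :
    ∫⁻ p, ‖signedSubgraphIndicator v p‖ₑ ^ 2 ∂μ.prod volume = ∫⁻ ω, ‖v ω‖ₑ ∂μ := by
  simpa [signedSubgraphIndicator] using
    lintegral_enorm_signedSubgraphIndicator_sub_sq (μ := μ) hv measurable_const (w := 0)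

lemma memLp_signedSubgraphIndicator {v : Ω → ℝ} (hv : Measurable v) (hv1 : Integrable v μ) :
    MemLp (signedSubgraphIndicator v) 2 (μ.prod (volume : Measure ℝ)) := by
  refine ⟨(measurable_signedSubgraphIndicator hv).aestronglyMeasurable, ?_⟩
  rw [eLpNorm_lt_top_iff_lintegral_rpow_enorm_lt_top two_ne_zero ENNReal.ofNat_ne_top]
  simpa [lintegral_enorm_signedSubgraphIndicator_sq hv, ← hasFiniteIntegral_def] using hv1.2

namespace MeasureTheory.L1

noncomputable def toL2 (f : Lp ℝ 1 μ) : Lp ℝ 2 (μ.prod (volume : Measure ℝ)) :=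
  (memLp_signedSubgraphIndicator (Lp.stronglyMeasurable f).measurable
    (integrable_coeFn f)).toLp _

lemma sq_norm_toL2_sub (f g : Lp ℝ 1 μ) : ‖toL2 f - toL2 g‖ ^ 2 = ‖f - g‖ := by
  rw [toL2, toL2, ← MemLp.toLp_sub, sq_norm_toLp_two,
    lintegral_enorm_signedSubgraphIndicator_sub_sq (Lp.stronglyMeasurable f).measurable
      (Lp.stronglyMeasurable g).measurable, ← dist_eq_norm, Lp.dist_def,
    eLpNorm_one_eq_lintegral_enorm]
  rfl

lemma sq_norm_toL2 (f : Lp ℝ 1 μ) : ‖toL2 f‖ ^ 2 = ‖f‖ := by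
  rw [toL2, sq_norm_toLp_two,
    lintegral_enorm_signedSubgraphIndicator_sq (Lp.stronglyMeasurable f).measurable,
    Lp.norm_def, eLpNorm_one_eq_lintegral_enorm]

end MeasureTheory.L1

end SubgraphEmbedding

theorem L1_stable_general
    {Ω : Type*} [MeasurableSpace Ω] (μ : Measure Ω)
    (f g : ℕ → Lp ℝ 1 μ)
    (hbf : ∃ C : ℝ, ∀ n, ‖f n‖ ≤ C) (hbg : ∃ C : ℝ, ∀ m, ‖g m‖ ≤ C)
    (U V : Ultrafilter ℕ)
    (Sm Ln : ℕ → ℝ) (S L : ℝ)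
    (hSm : ∀ m, Tendsto (fun n => ‖f n - g m‖) (U : Filter ℕ) (nhds (Sm m)))
    (hS : Tendsto Sm (V : Filter ℕ) (nhds S))
    (hLn : ∀ n, Tendsto (fun m => ‖f n - g m‖) (V : Filter ℕ) (nhds (Ln n)))
    (hL : Tendsto Ln (U : Filter ℕ) (nhds L)) :
    S = L := by
  have toL2_bounded {h : ℕ → Lp ℝ 1 μ} :
      (∃ C : ℝ, ∀ n, ‖h n‖ ≤ C) → ∃ C, ∀ n, ‖L1.toL2 (h n)‖ ≤ C := fun ⟨C, hC⟩ =>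
    ⟨√C, fun n => by
      rw [← Real.sqrt_sq (norm_nonneg _), L1.sq_norm_toL2]
      exact Real.sqrt_le_sqrt (hC n)⟩
  simp only [← L1.sq_norm_toL2_sub] at hSm hLn
  exact iterated_ultrafilter_lim_norm_sub_sq_comm (toL2_bounded hbf) (toL2_bounded hbg)
    hSm hS hLn hL

/-- Corollary 6.3 (Krivine–Maurey): `L₁` is stable: iterated ultrafilter
limits of `‖f_n - g_m‖₁` for bounded sequences commute. -/
theorem L1_stable
    {Ω : Type*} [MeasurableSpace Ω] (μ : Measure Ω)
    (f g : ℕ → Lp ℝ 1 μ)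
    (hbf : ∃ C : ℝ, ∀ n, ‖f n‖ ≤ C) (hbg : ∃ C : ℝ, ∀ m, ‖g m‖ ≤ C)
    (U V : Ultrafilter ℕ)
    (hU : (U : Filter ℕ) ≤ Filter.cofinite)
    (hV : (V : Filter ℕ) ≤ Filter.cofinite)
    (Sm Ln : ℕ → ℝ) (S L : ℝ)
    (hSm : ∀ m, Tendsto (fun n => ‖f n - g m‖) (U : Filter ℕ) (nhds (Sm m)))
    (hS : Tendsto Sm (V : Filter ℕ) (nhds S))
    (hLn : ∀ n, Tendsto (fun m => ‖f n - g m‖) (V : Filter ℕ) (nhds (Ln n)))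
    (hL : Tendsto Ln (U : Filter ℕ) (nhds L)) :
    S = L :=
  L1_stable_general μ f g hbf hbg U V Sm Ln S L hSm hS hLn hL
end

section
/- Hilbert space is stable: let H be a real Hilbert space, let (x_n) and (y_m) be bounded sequences in H, and let 𝒰 and 𝒱 be free ultrafilters on ℕ. Suppose S_m, L_n, S, L are real numbers such that: for every m, ‖x_n − y_m‖ converges to S_m along 𝒰; S_m converges to S along 𝒱; for every n, ‖x_n − y_m‖ converges to L_n along 𝒱; and L_n converges to L along 𝒰. Then S = L; that is, lim_{n,𝒰} lim_{m,𝒱} ‖x_n − y_m‖ = lim_{m,𝒱} lim_{n,𝒰} ‖x_n − y_m‖. -/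
open Filter

open scoped RealInnerProductSpace

/-- Bounded real sequences have limits along ultrafilters. -/
lemma exists_ultrafilter_limit (U : Ultrafilter ℕ) (a : ℕ → ℝ) (C : ℝ)
    (h : ∀ n, |a n| ≤ C) : ∃ l : ℝ, Tendsto a (U : Filter ℕ) (nhds l) := by
  obtain ⟨l, -, hl⟩ := (isCompact_Icc (a := -C) (b := C)).ultrafilter_le_nhds (U.map a)
    (Filter.le_principal_iff.2 (Filter.mem_map.2 (Filter.univ_mem'
      (fun n => abs_le.1 (h n)))))
  exact ⟨l, hl⟩

/-- Bounded sequences in a Hilbert space have weak limits along ultrafilters. -/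
lemma exists_weak_limit {H : Type*} [NormedAddCommGroup H] [InnerProductSpace ℝ H]
    [CompleteSpace H] (U : Ultrafilter ℕ) (x : ℕ → H) (C : ℝ) (hC : ∀ n, ‖x n‖ ≤ C) :
    ∃ w : H, ∀ v : H, Tendsto (fun n => ⟪x n, v⟫) (U : Filter ℕ) (nhds ⟪w, v⟫) := by
  have hC0 : 0 ≤ C := le_trans (norm_nonneg (x 0)) (hC 0)
  have hb : ∀ v : H, ∀ n, |⟪x n, v⟫| ≤ C * ‖v‖ := fun v n => by
    calc |⟪x n, v⟫| ≤ ‖x n‖ * ‖v‖ := abs_real_inner_le_norm _ _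
      _ ≤ C * ‖v‖ := by gcongr; exact hC n
  have hex : ∀ v : H, ∃ l : ℝ, Tendsto (fun n => ⟪x n, v⟫) (U : Filter ℕ) (nhds l) :=
    fun v => exists_ultrafilter_limit U _ (C * ‖v‖) (hb v)
  choose l hl using hex
  let Lmap : H →ₗ[ℝ] ℝ :=
    { toFun := l
      map_add' := fun v w => by
        refine tendsto_nhds_unique (hl (v + w)) ?_
        have := (hl v).add (hl w)
        simpa [inner_add_right] using this
      map_smul' := fun c v => by
        refine tendsto_nhds_unique (hl (c • v)) ?_
        have := (hl v).const_mul c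
        simpa [inner_smul_right, mul_comm] using this }
  have hbound : ∀ v : H, ‖Lmap v‖ ≤ C * ‖v‖ := fun v => by
    have : Tendsto (fun n => |⟪x n, v⟫|) (U : Filter ℕ) (nhds |l v|) := (hl v).abs
    have hle : |l v| ≤ C * ‖v‖ :=
      le_of_tendsto this (Filter.univ_mem' (fun n => hb v n))
    exact hle
  set f : H →L[ℝ] ℝ := LinearMap.mkContinuous Lmap C hbound
  refine ⟨(InnerProductSpace.toDual ℝ H).symm f, fun v => ?_⟩
  have hfv : ⟪(InnerProductSpace.toDual ℝ H).symm f, v⟫ = f v :=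
    InnerProductSpace.toDual_symm_apply (x := v) (y := f)
  rw [hfv]
  exact hl v

/-- Observation 6.1 (Krivine–Maurey): Hilbert space is stable: iterated
ultrafilter limits of `‖x_n - y_m‖` for bounded sequences commute. -/
theorem hilbert_space_stable
    {H : Type*} [NormedAddCommGroup H] [InnerProductSpace ℝ H] [CompleteSpace H]
    (x y : ℕ → H)
    (hbx : ∃ C : ℝ, ∀ n, ‖x n‖ ≤ C) (hby : ∃ C : ℝ, ∀ m, ‖y m‖ ≤ C)
    (U V : Ultrafilter ℕ)
    (hU : (U : Filter ℕ) ≤ Filter.cofinite)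
    (hV : (V : Filter ℕ) ≤ Filter.cofinite)
    (Sm Ln : ℕ → ℝ) (S L : ℝ)
    (hSm : ∀ m, Tendsto (fun n => ‖x n - y m‖) (U : Filter ℕ) (nhds (Sm m)))
    (hS : Tendsto Sm (V : Filter ℕ) (nhds S))
    (hLn : ∀ n, Tendsto (fun m => ‖x n - y m‖) (V : Filter ℕ) (nhds (Ln n)))
    (hL : Tendsto Ln (U : Filter ℕ) (nhds L)) :
    S = L := by
  obtain ⟨Cx, hCx⟩ := hbx
  obtain ⟨Cy, hCy⟩ := hby
  have hCx0 : 0 ≤ Cx := le_trans (norm_nonneg _) (hCx 0)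
  have hCy0 : 0 ≤ Cy := le_trans (norm_nonneg _) (hCy 0)
  -- weak limits
  obtain ⟨w, hw⟩ := exists_weak_limit U x Cx hCx
  obtain ⟨z, hz⟩ := exists_weak_limit V y Cy hCy
  -- limits of squared norms
  obtain ⟨a, ha⟩ := exists_ultrafilter_limit U (fun n => ‖x n‖ ^ 2) (Cx ^ 2)
    (fun n => by
      rw [abs_of_nonneg (by positivity)]
      exact pow_le_pow_left₀ (norm_nonneg _) (hCx n) 2)
  obtain ⟨b, hb⟩ := exists_ultrafilter_limit V (fun m => ‖y m‖ ^ 2) (Cy ^ 2)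
    (fun m => by
      rw [abs_of_nonneg (by positivity)]
      exact pow_le_pow_left₀ (norm_nonneg _) (hCy m) 2)
  have expand : ∀ n m, ‖x n - y m‖ ^ 2 = ‖x n‖ ^ 2 + ‖y m‖ ^ 2 - 2 * ⟪x n, y m⟫ := by
    intro n m
    have := norm_sub_sq_real (x n) (y m)
    linarith [this]
  -- S m squared
  have hSmsq : ∀ m, Sm m ^ 2 = a + ‖y m‖ ^ 2 - 2 * ⟪w, y m⟫ := by
    intro m
    refine tendsto_nhds_unique (((hSm m).pow 2)) ?_
    have h1 : Tendsto (fun n => ‖x n‖ ^ 2 + ‖y m‖ ^ 2 - 2 * ⟪x n, y m⟫)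
        (U : Filter ℕ) (nhds (a + ‖y m‖ ^ 2 - 2 * ⟪w, y m⟫)) :=
      ((ha.add tendsto_const_nhds).sub ((hw (y m)).const_mul 2))
    exact h1.congr (fun n => (expand n m).symm)
  -- S squared
  have hSsq : S ^ 2 = a + b - 2 * ⟪w, z⟫ := by
    refine tendsto_nhds_unique (hS.pow 2) ?_
    have hwy : Tendsto (fun m => ⟪w, y m⟫) (V : Filter ℕ) (nhds ⟪w, z⟫) := by
      have := hz w
      simp only [real_inner_comm] at this ⊢
      exact this
    have h1 : Tendsto (fun m => a + ‖y m‖ ^ 2 - 2 * ⟪w, y m⟫)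
        (V : Filter ℕ) (nhds (a + b - 2 * ⟪w, z⟫)) :=
      ((tendsto_const_nhds.add hb).sub (hwy.const_mul 2))
    exact h1.congr (fun m => (hSmsq m).symm)
  -- L n squared
  have hLnsq : ∀ n, Ln n ^ 2 = ‖x n‖ ^ 2 + b - 2 * ⟪x n, z⟫ := by
    intro n
    refine tendsto_nhds_unique (((hLn n).pow 2)) ?_
    have hxz : Tendsto (fun m => ⟪x n, y m⟫) (V : Filter ℕ) (nhds ⟪x n, z⟫) := by
      have := hz (x n)
      simp only [real_inner_comm] at this ⊢
      exact this
    have h1 : Tendsto (fun m => ‖x n‖ ^ 2 + ‖y m‖ ^ 2 - 2 * ⟪x n, y m⟫)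
        (V : Filter ℕ) (nhds (‖x n‖ ^ 2 + b - 2 * ⟪x n, z⟫)) :=
      ((tendsto_const_nhds.add hb).sub (hxz.const_mul 2))
    exact h1.congr (fun m => (expand n m).symm)
  -- L squared
  have hLsq : L ^ 2 = a + b - 2 * ⟪w, z⟫ := by
    refine tendsto_nhds_unique (hL.pow 2) ?_
    have h1 : Tendsto (fun n => ‖x n‖ ^ 2 + b - 2 * ⟪x n, z⟫)
        (U : Filter ℕ) (nhds (a + b - 2 * ⟪w, z⟫)) :=
      ((ha.add tendsto_const_nhds).sub ((hw z).const_mul 2))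
    exact h1.congr (fun n => (hLnsq n).symm)
  -- nonnegativity
  have hSm0 : ∀ m, 0 ≤ Sm m := fun m =>
    ge_of_tendsto' (hSm m) (fun n => norm_nonneg _)
  have hS0 : 0 ≤ S := ge_of_tendsto' hS hSm0
  have hLn0 : ∀ n, 0 ≤ Ln n := fun n =>
    ge_of_tendsto' (hLn n) (fun m => norm_nonneg _)
  have hL0 : 0 ≤ L := ge_of_tendsto' hL hLn0
  have hsq : S ^ 2 = L ^ 2 := by rw [hSsq, hLsq]
  nlinarith [sq_nonneg (S - L), sq_nonneg (S + L)]
end
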